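/- Let n : ℕ and let R be a finite list of words in n generators, and let G be the finitely presented group PresentedGroup S, where S ⊆ FreeGroup (Fin n) is the set of elements determined by R. Then the predicate on lists of words X asserting that the subgroup Subgroup.closure T of G is normal, where T is the set of elements of G represented by the words in X (equivalently, asserting Subgroup.closure T = Subgroup.normalClosure T), satisfies REPred. -/

import Mathlib

/-!
Let `K` be the subgroup generated by the images of the words of `X`. Since the letters `a ^ (±1)`
generate the group and are closed under inversion, `K` is normal iff it contains the finitely many
conjugates `a ^ (±1) * u * a ^ (∓1)`, `u ∈ X`. The preimage of `K` in the free group is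
`⟨X⟩ ⊔ ⟪R⟫`, so a word lies in `K` iff it equals, after free reduction, a product of factors
`X[i] ^ (±1)` and `c * R[i] ^ (±1) * c⁻¹`. Hence normality means that some finite list of such
products witnesses all these memberships: a primitive recursive condition on the list, and an
existential over a primitive recursive relation is recursively enumerable.
-/

/-- The set of relators in the free group determined by a list of words. -/
def relsOf {α : Type} (R : List (List (α × Bool))) : Set (FreeGroup α) :=
  {x | ∃ r ∈ R, x = FreeGroup.mk r}

/-- The element of the presented group represented by a word. -/
def wordElt {α : Type} (R : List (List (α × Bool))) (w : List (α × Bool)) :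
    PresentedGroup (relsOf R) :=
  PresentedGroup.mk (relsOf R) (FreeGroup.mk w)

namespace Subgroup

variable {G : Type*} [Group G]

theorem closure_eq_normalClosure_iff_normal {s : Set G} :
    closure s = normalClosure s ↔ (closure s).Normal := by
  refine ⟨fun h => h ▸ normalClosure_normal, fun _ => ?_⟩
  rw [← normalClosure_closure_eq_normalClosure, normalClosure_eq_self]

theorem closure_normal_of_conj_mem {s t : Set G} (ht : closure t = ⊤) (ht_inv : ∀ g ∈ t, g⁻¹ ∈ t)
    (hconj : ∀ g ∈ t, ∀ x ∈ s, g * x * g⁻¹ ∈ closure s) : (closure s).Normal := by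
  have conj_mem : ∀ g ∈ t, ∀ x ∈ closure s, g * x * g⁻¹ ∈ closure s := fun g hg _ hx =>
    (closure_le ((closure s).comap (MulAut.conj g).toMonoidHom)).2 (hconj g hg) hx
  rw [← normalizer_eq_top_iff, eq_top_iff, ← ht, closure_le]
  intro g hg x
  refine ⟨conj_mem g hg x, fun hx => ?_⟩
  simpa [mul_assoc] using conj_mem g⁻¹ (ht_inv g hg) _ hx

theorem mem_closure_range_iff_exists_prod {β : Type*} {g : β → G}
    (hg : ∀ b, ∃ b', g b' = (g b)⁻¹) {x : G} :
    x ∈ closure (Set.range g) ↔ ∃ L : List β, (L.map g).prod = x := by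
  have hinv : (Set.range g)⁻¹ ⊆ Set.range g := by
    rintro _ ⟨b, hb⟩
    obtain ⟨b', hb'⟩ := hg b
    exact ⟨b', by rw [hb', hb, inv_inv]⟩
  rw [← mem_toSubmonoid, closure_toSubmonoid, Set.union_eq_self_of_subset_right hinv,
    ← FreeMonoid.mrange_lift, MonoidHom.mem_mrange]
  simp only [FreeMonoid.lift_apply]
  exact ⟨fun ⟨y, hy⟩ => ⟨y.toList, hy⟩, fun ⟨L, hL⟩ => ⟨FreeMonoid.ofList L, hL⟩⟩

end Subgroup

theorem List.exists_list_forall_exists_mem {α β : Type*} {P : α → β → Prop} {l : List α}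
    (h : ∀ a ∈ l, ∃ b, P a b) : ∃ bs : List β, ∀ a ∈ l, ∃ b ∈ bs, P a b := by
  choose f hf using h
  exact ⟨l.attach.map fun a => f a.1 a.2, fun a ha =>
    ⟨f a ha, List.mem_map.2 ⟨⟨a, ha⟩, List.mem_attach _ _, rfl⟩, hf a ha⟩⟩

namespace FreeGroup

variable {α β : Type*}

theorem mk_flatMap (f : β → List (α × Bool)) (L : List β) :
    mk (L.flatMap f) = (L.map (mk ∘ f)).prod := by
  induction L with
  | nil => rfl
  | cons b L ih => simp [← ih, mul_mk]

def conjWord (c u : List (α × Bool)) : List (α × Bool) := c ++ u ++ invRev c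

theorem mk_conjWord (c u : List (α × Bool)) : mk (conjWord c u) = mk c * mk u * (mk c)⁻¹ := by
  rw [conjWord, inv_mk, mul_mk, mul_mk]

theorem mk_eq_mk_iff [DecidableEq α] {L₁ L₂ : List (α × Bool)} :
    mk L₁ = mk L₂ ↔ reduce L₁ = reduce L₂ :=
  ⟨reduce.sound, reduce.exact⟩

section Computability

open Primrec

variable [Primcodable α]

theorem primrec_invRev : Primrec (invRev : List (α × Bool) → List (α × Bool)) :=
  list_reverse.comp <| list_map .id <| (pair (fst.comp snd) (Primrec.not.comp (snd.comp snd))).to₂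

theorem primrec_reduce [DecidableEq α] : Primrec (reduce : List (α × Bool) → List (α × Bool)) := by
  have hcancel : PrimrecRel fun (x hd : α × Bool) => x.1 = hd.1 ∧ x.2 = !hd.2 :=
    (Primrec.eq.comp (fst.comp fst) (fst.comp snd)).and
      (Primrec.eq.comp (snd.comp fst) (Primrec.not.comp (snd.comp snd)))
  -- the step function of the `List.rec` that defines `reduce`
  have hstep : Primrec₂ fun (_ : List (α × Bool))
      (s : (α × Bool) × List (α × Bool) × List (α × Bool)) =>
      List.casesOn (motive := fun _ => List (α × Bool)) s.2.2 [s.1] fun hd tl =>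
        if s.1.1 = hd.1 ∧ s.1.2 = !hd.2 then tl else s.1 :: hd :: tl :=
    list_casesOn (snd.comp (snd.comp snd)) (list_cons.comp (fst.comp snd) (const []))
      (Primrec.ite (hcancel.comp (fst.comp (snd.comp fst)) (fst.comp snd)) (snd.comp snd)
        (list_cons.comp (fst.comp (snd.comp fst))
          (list_cons.comp (fst.comp snd) (snd.comp snd)))).to₂
  exact (list_rec .id (const []) hstep).of_eq fun L => rfl

theorem primrec_conjWord : Primrec₂ (conjWord : List (α × Bool) → List (α × Bool) → _) :=
  list_append.comp (list_append.comp fst snd) (primrec_invRev.comp fst)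

end Computability

end FreeGroup

theorem REPred.exists_of_computablePred {α β : Type*} [Primcodable α] [Primcodable β]
    {p : α → β → Prop} (hp : ComputablePred fun x : α × β => p x.1 x.2) :
    REPred fun a => ∃ b, p a b := by
  obtain ⟨g, hg, hpg⟩ := ComputablePred.computable_iff.1 hp
  have hpg' (a : α) (b : β) : p a b ↔ g (a, b) = true := by rw [← congrFun hpg (a, b)]
  -- `Nat.rfindOpt` searches for a code `n` of a witness
  let f : α → ℕ → Option β := fun a n =>
    (Encodable.decode n).bind fun b => bif g (a, b) then some b else none
  have hf : Computable₂ f :=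
    Computable.option_bind (Computable.decode.comp .snd) <|
      Computable.cond (hg.comp (.pair (Computable.fst.comp .fst) .snd))
        (Computable.option_some.comp .snd) (Computable.const none) |>.to₂
  refine (Partrec.rfindOpt hf).dom_re.of_eq fun a => ?_
  rw [Nat.rfindOpt_dom]
  constructor
  · rintro ⟨n, b, hb⟩
    obtain ⟨b', -, hb'⟩ := Option.mem_bind_iff.1 hb
    refine ⟨b', (hpg' a b').2 ?_⟩
    cases h : g (a, b') <;> simp [h] at hb' ⊢
  · rintro ⟨b, hb⟩
    exact ⟨Encodable.encode b, b, by simp [f, (hpg' a b).1 hb]⟩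

namespace WordProblem

open FreeGroup

variable {α : Type}

/-- Out-of-range indices give the empty word, which keeps every value in the subgroup generated
by `S`. -/
def signedWord (S : List (List (α × Bool))) (p : ℕ × Bool) : List (α × Bool) :=
  bif p.2 then S.getD p.1 [] else invRev (S.getD p.1 [])

theorem mk_signedWord_not (S : List (List (α × Bool))) (i : ℕ) (b : Bool) :
    mk (signedWord S (i, !b)) = (mk (signedWord S (i, b)))⁻¹ := by
  cases b <;> simp [signedWord, inv_mk, invRev_invRev]

theorem mk_signedWord_mem {S : List (List (α × Bool))} {H : Subgroup (FreeGroup α)}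
    (hS : relsOf S ⊆ H) (p : ℕ × Bool) : mk (signedWord S p) ∈ H := by
  have hget : mk (S.getD p.1 []) ∈ H := by
    by_cases hi : p.1 < S.length
    · exact hS ⟨_, List.getD_eq_getElem _ _ hi ▸ List.getElem_mem hi, rfl⟩
    · rw [List.getD_eq_default _ _ (not_lt.1 hi)]
      exact H.one_mem
  obtain ⟨i, _ | _⟩ := p
  · simpa [signedWord, inv_mk] using H.inv_mem hget
  · exact hget

theorem mk_getElem_eq_signedWord (S : List (List (α × Bool))) (i : ℕ) (hi : i < S.length) :
    mk S[i] = mk (signedWord S (i, true)) := by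
  simp [signedWord, List.getElem?_eq_getElem hi]

/-- A factor `.inl (i, b)` stands for `X[i] ^ (±1)`, and `.inr (c, i, b)` for the conjugate
`c * R[i] ^ (±1) * c⁻¹` of a relator. -/
abbrev Factor (α : Type) := (ℕ × Bool) ⊕ (List (α × Bool) × ℕ × Bool)

def factorWord (X R : List (List (α × Bool))) : Factor α → List (α × Bool)
  | .inl p => signedWord X p
  | .inr (c, p) => conjWord c (signedWord R p)

def Factor.flip : Factor α → Factor α
  | .inl (i, b) => .inl (i, !b)
  | .inr (c, i, b) => .inr (c, i, !b)

theorem mk_factorWord_flip (X R : List (List (α × Bool))) (f : Factor α) :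
    mk (factorWord X R f.flip) = (mk (factorWord X R f))⁻¹ := by
  rcases f with ⟨i, b⟩ | ⟨c, i, b⟩
  · exact mk_signedWord_not X i b
  · simp only [Factor.flip, factorWord, mk_conjWord, mk_signedWord_not, mul_inv_rev, inv_inv,
      mul_assoc]

theorem closure_sup_normalClosure_eq_closure_range (X R : List (List (α × Bool))) :
    Subgroup.closure (relsOf X) ⊔ Subgroup.normalClosure (relsOf R) =
      Subgroup.closure (Set.range (mk ∘ factorWord X R)) := by
  classical
  apply le_antisymm
  · rw [sup_le_iff, Subgroup.normalClosure, Subgroup.closure_le, Subgroup.closure_le]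
    constructor
    · rintro _ ⟨u, hu, rfl⟩
      obtain ⟨i, hi, rfl⟩ := List.getElem_of_mem hu
      exact Subgroup.subset_closure ⟨.inl (i, true), (mk_getElem_eq_signedWord X i hi).symm⟩
    · intro x hx
      obtain ⟨_, ⟨r, hr, rfl⟩, hconj⟩ := Group.mem_conjugatesOfSet_iff.1 hx
      obtain ⟨c, rfl⟩ := isConj_iff.1 hconj
      obtain ⟨i, hi, rfl⟩ := List.getElem_of_mem hr
      refine Subgroup.subset_closure ⟨.inr (c.toWord, i, true), ?_⟩
      simp only [Function.comp_apply, factorWord, mk_conjWord, mk_toWord,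
        ← mk_getElem_eq_signedWord R i hi]
  · rw [Subgroup.closure_le]
    rintro _ ⟨(p | ⟨c, p⟩), rfl⟩
    · exact le_sup_left (a := Subgroup.closure (relsOf X))
        (mk_signedWord_mem Subgroup.subset_closure p)
    · refine le_sup_right (a := Subgroup.closure (relsOf X)) ?_
      simp only [Function.comp_apply, factorWord, mk_conjWord]
      exact Subgroup.normalClosure_normal.conj_mem _
        (mk_signedWord_mem Subgroup.subset_normalClosure p) _

theorem comap_closure_wordElt (X R : List (List (α × Bool))) :
    (Subgroup.closure {x | ∃ u ∈ X, x = wordElt R u}).comap (PresentedGroup.mk (relsOf R)) =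
      Subgroup.closure (relsOf X) ⊔ Subgroup.normalClosure (relsOf R) := by
  have himage : {x | ∃ u ∈ X, x = wordElt R u} = PresentedGroup.mk (relsOf R) '' relsOf X := by
    ext x
    constructor
    · rintro ⟨u, hu, rfl⟩
      exact ⟨_, ⟨u, hu, rfl⟩, rfl⟩
    · rintro ⟨_, ⟨u, hu, rfl⟩, rfl⟩
      exact ⟨u, hu, rfl⟩
  rw [himage, ← MonoidHom.map_closure, Subgroup.comap_map_eq]
  congr
  exact QuotientGroup.ker_mk' _

theorem wordElt_mem_closure_iff [DecidableEq α] (X R : List (List (α × Bool)))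
    (w : List (α × Bool)) :
    wordElt R w ∈ Subgroup.closure {x | ∃ u ∈ X, x = wordElt R u} ↔
      ∃ L : List (Factor α), reduce (L.flatMap (factorWord X R)) = reduce w := by
  rw [wordElt, ← Subgroup.mem_comap, comap_closure_wordElt,
    closure_sup_normalClosure_eq_closure_range,
    Subgroup.mem_closure_range_iff_exists_prod fun f => ⟨f.flip, mk_factorWord_flip X R f⟩]
  simp only [← mk_flatMap]
  exact exists_congr fun L => mk_eq_mk_iff

theorem wordElt_conjWord (R : List (List (α × Bool))) (c u : List (α × Bool)) :
    wordElt R (conjWord c u) = wordElt R c * wordElt R u * (wordElt R c)⁻¹ := by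
  simp only [wordElt, mk_conjWord, _root_.map_mul, _root_.map_inv]

theorem wordElt_singleton_not (R : List (List (α × Bool))) (a : α) (b : Bool) :
    wordElt R [(a, !b)] = (wordElt R [(a, b)])⁻¹ := by
  simp [wordElt, ← _root_.map_inv, inv_mk, invRev]

noncomputable def letterConjugates [Fintype α] (X : List (List (α × Bool))) :
    List (List (α × Bool)) :=
  X.flatMap fun u => (Finset.univ : Finset (α × Bool)).toList.map fun q => conjWord [q] u

theorem mem_letterConjugates [Fintype α] {X : List (List (α × Bool))} {w : List (α × Bool)} :
    w ∈ letterConjugates X ↔ ∃ u ∈ X, ∃ q : α × Bool, w = conjWord [q] u := by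
  simp [letterConjugates, eq_comm]

theorem closure_wordElt_normal_iff [Fintype α] (X R : List (List (α × Bool))) :
    (Subgroup.closure {x | ∃ u ∈ X, x = wordElt R u}).Normal ↔
      ∀ w ∈ letterConjugates X, wordElt R w ∈ Subgroup.closure {x | ∃ u ∈ X, x = wordElt R u} := by
  constructor
  · intro hnormal w hw
    obtain ⟨u, hu, q, rfl⟩ := mem_letterConjugates.1 hw
    rw [wordElt_conjWord]
    exact hnormal.conj_mem _ (Subgroup.subset_closure ⟨u, hu, rfl⟩) _
  · intro hconj
    refine Subgroup.closure_normal_of_conj_mem (t := Set.range fun q => wordElt R [q]) ?_ ?_ ?_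
    · rw [eq_top_iff, ← PresentedGroup.closure_range_of]
      exact Subgroup.closure_mono fun _ ⟨a, ha⟩ => ⟨(a, true), ha⟩
    · rintro _ ⟨⟨a, b⟩, rfl⟩
      exact ⟨(a, !b), wordElt_singleton_not R a b⟩
    · rintro _ ⟨q, rfl⟩ _ ⟨u, hu, rfl⟩
      rw [← wordElt_conjWord]
      exact hconj _ (mem_letterConjugates.2 ⟨u, hu, q, rfl⟩)

theorem closure_eq_normalClosure_iff_exists_certificates [Fintype α] [DecidableEq α]
    (X R : List (List (α × Bool))) :
    Subgroup.closure {x | ∃ u ∈ X, x = wordElt R u} =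
        Subgroup.normalClosure {x | ∃ u ∈ X, x = wordElt R u} ↔
      ∃ cs : List (List (Factor α)),
        ∀ w ∈ letterConjugates X, ∃ L ∈ cs, reduce (L.flatMap (factorWord X R)) = reduce w := by
  simp only [Subgroup.closure_eq_normalClosure_iff_normal, closure_wordElt_normal_iff,
    wordElt_mem_closure_iff]
  exact ⟨List.exists_list_forall_exists_mem, fun ⟨cs, h⟩ w hw => (h w hw).imp fun _ hL => hL.2⟩

section Computability

open Primrec

variable [Primcodable α]

theorem primrec_signedWord : Primrec₂ (signedWord : List (List (α × Bool)) → ℕ × Bool → _) :=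
  have hget : Primrec fun x : List (List (α × Bool)) × ℕ × Bool => x.1.getD x.2.1 [] :=
    (list_getD []).comp fst (fst.comp snd)
  Primrec.cond (snd.comp snd) hget (primrec_invRev.comp hget)

theorem primrec_factorWord (R : List (List (α × Bool))) :
    Primrec₂ fun X : List (List (α × Bool)) => factorWord X R :=
  (sumCasesOn snd (primrec_signedWord.comp (fst.comp fst) snd).to₂
    (primrec_conjWord.comp (fst.comp snd)
      (primrec_signedWord.comp (const R) (snd.comp snd))).to₂).to₂.of_eq
    fun _ f => by rcases f with p | ⟨c, p⟩ <;> rfl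

theorem primrec_letterConjugates [Fintype α] :
    Primrec (letterConjugates : List (List (α × Bool)) → _) :=
  list_flatMap .id <| (list_map (const _)
    (primrec_conjWord.comp (list_cons.comp snd (const [])) (snd.comp fst)).to₂).to₂

theorem primrecRel_certificates [Fintype α] [DecidableEq α] (R : List (List (α × Bool))) :
    PrimrecRel fun (X : List (List (α × Bool))) (cs : List (List (Factor α))) =>
      ∀ w ∈ letterConjugates X, ∃ L ∈ cs, reduce (L.flatMap (factorWord X R)) = reduce w := by
  have hcheck : PrimrecRel fun (L : List (Factor α))
      (y : (List (List (α × Bool)) × List (List (Factor α))) × List (α × Bool)) =>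
      reduce (L.flatMap (factorWord y.1.1 R)) = reduce y.2 :=
    Primrec.eq.comp
      (primrec_reduce.comp (list_flatMap fst
        ((primrec_factorWord R).comp (fst.comp (fst.comp (snd.comp fst))) snd).to₂))
      (primrec_reduce.comp (snd.comp snd))
  have hexists : PrimrecRel fun (w : List (α × Bool))
      (p : List (List (α × Bool)) × List (List (Factor α))) =>
      ∃ L ∈ p.2, reduce (L.flatMap (factorWord p.1 R)) = reduce w :=
    hcheck.exists_mem_list.comp (snd.comp snd) (pair snd fst)
  exact hexists.forall_mem_list.comp (primrec_letterConjugates.comp fst) .id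

end Computability

end WordProblem

/-- Normality of the subgroup generated by a finite list of words is recursively
enumerable. -/
theorem normality_re (n : ℕ) (R : List (List (Fin n × Bool))) :
    REPred fun X : List (List (Fin n × Bool)) =>
      Subgroup.closure {x | ∃ u ∈ X, x = wordElt R u} =
        Subgroup.normalClosure {x | ∃ u ∈ X, x = wordElt R u} :=
  (REPred.exists_of_computablePred (WordProblem.primrecRel_certificates R).computablePred).of_eq
    fun X => (WordProblem.closure_eq_normalClosure_iff_exists_certificates X R).symm
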